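/- Near-identity of the Duffy transform at (1,0) in a weighted sense (case θ = 1): Let V̂ = (1,0), T̂ = {0 < η < ξ < 1}, and v ∈ H¹(T̂). Then ∫₀¹ ∫_η¹ d_{V̂}(ξ,η)^{−2} (v(η(1−ξ)+ξ, η) − v(ξ,η))² dξ dη ≤ C ∫₀¹∫_η¹ |∂₁v(ξ,η)|² dξ dη, using d_{V̂}(ξ,η) ≥ 1−ξ on T̂ and Hardy's inequality. -/

import Mathlib

/-!
On `T̂` the Duffy image `(η(1-ξ)+ξ, η)` of `(ξ, η)` lies on the horizontal segment from `(ξ, η)`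
to `(1, η)`, so the increment of `v` is at most the tail integral `∫_ξ^1 |∂₁v(s, η)| ds`, while
`d_V̂(ξ, η) ≥ 1 - ξ`. On each horizontal line, Hardy's inequality
`∫_a^b (b - x)⁻² (∫_x^b φ)² dx ≤ 4 ∫_a^b φ²` then gives the claim with `C = 4`. Hardy's
inequality follows from Cauchy–Schwarz against the weight `(b - s)^{1/2}` and Fubini, using
`∫_x^b (b - s)^{-1/2} ds = 2 (b - x)^{1/2}` and `∫_a^s (b - x)^{-3/2} dx ≤ 2 (b - s)^{-1/2}`.
-/

open MeasureTheory Set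
open scoped ENNReal

/-- The reference triangle `T̂ = {(ξ,η) : 0 < η < ξ < 1}`. -/
def refTriangle : Set (ℝ × ℝ) := {p | 0 < p.2 ∧ p.2 < p.1 ∧ p.1 < 1}

lemma isOpen_refTriangle : IsOpen refTriangle :=
  (isOpen_lt continuous_const continuous_snd).inter
    ((isOpen_lt continuous_snd continuous_fst).inter (isOpen_lt continuous_fst continuous_const))

lemma lintegral_indicator_refTriangle (h : ℝ × ℝ → ℝ≥0∞) (η : ℝ) :
    ∫⁻ ξ, refTriangle.indicator h (ξ, η) =
      (Ioo 0 1).indicator (fun η ↦ ∫⁻ ξ in Ioo η 1, h (ξ, η)) η := by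
  by_cases hη : η ∈ Ioo (0 : ℝ) 1
  · rw [indicator_of_mem hη, ← lintegral_indicator measurableSet_Ioo]
    congr with ξ
    simp [indicator_apply, refTriangle, hη.1]
  · rw [indicator_of_notMem hη]
    refine (lintegral_congr fun ξ ↦ indicator_of_notMem ?_ _).trans lintegral_zero
    exact fun hp ↦ hη ⟨hp.1, hp.2.1.trans hp.2.2⟩

/-- Only `≤`, but for arbitrary `h`: with `v` arbitrary off `T̂`, the Duffy integrand need not be
measurable. -/
lemma setLIntegral_refTriangle_le (h : ℝ × ℝ → ℝ≥0∞) :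
    ∫⁻ p in refTriangle, h p ≤ ∫⁻ η in Ioo 0 1, ∫⁻ ξ in Ioo η 1, h (ξ, η) := by
  rw [← lintegral_indicator isOpen_refTriangle.measurableSet, Measure.volume_eq_prod,
    ← lintegral_prod_swap]
  refine (lintegral_prod_le _).trans_eq ?_
  simp only [Prod.swap_prod_mk, lintegral_indicator_refTriangle]
  exact lintegral_indicator measurableSet_Ioo _

lemma setLIntegral_refTriangle {h : ℝ × ℝ → ℝ≥0∞} (hh : Measurable h) :
    ∫⁻ p in refTriangle, h p = ∫⁻ η in Ioo 0 1, ∫⁻ ξ in Ioo η 1, h (ξ, η) := by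
  rw [← lintegral_indicator isOpen_refTriangle.measurableSet, Measure.volume_eq_prod,
    lintegral_prod_symm _ (hh.indicator isOpen_refTriangle.measurableSet).aemeasurable]
  simp only [lintegral_indicator_refTriangle]
  exact lintegral_indicator measurableSet_Ioo _

lemma lintegral_Ioo_lintegral_Ioo_swap (a b : ℝ) {F : ℝ → ℝ → ℝ≥0∞}
    (hF : Measurable (Function.uncurry F)) :
    ∫⁻ x in Ioo a b, ∫⁻ y in Ioo x b, F x y = ∫⁻ y in Ioo a b, ∫⁻ x in Ioo a y, F x y := by
  set S : Set (ℝ × ℝ) := {p | a < p.1 ∧ p.1 < p.2 ∧ p.2 < b}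
  have hS : MeasurableSet S := by measurability
  have hL : ∀ x, ∫⁻ y, S.indicator (Function.uncurry F) (x, y) =
      (Ioo a b).indicator (fun x ↦ ∫⁻ y in Ioo x b, F x y) x := by
    intro x
    by_cases hx : x ∈ Ioo a b
    · rw [indicator_of_mem hx, ← lintegral_indicator measurableSet_Ioo]
      congr with y
      simp [S, indicator_apply, hx.1]
    · rw [indicator_of_notMem hx]
      refine (lintegral_congr fun y ↦ indicator_of_notMem ?_ _).trans lintegral_zero
      exact fun hp ↦ hx ⟨hp.1, hp.2.1.trans hp.2.2⟩
  have hR : ∀ y, ∫⁻ x, S.indicator (Function.uncurry F) (x, y) =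
      (Ioo a b).indicator (fun y ↦ ∫⁻ x in Ioo a y, F x y) y := by
    intro y
    by_cases hy : y ∈ Ioo a b
    · rw [indicator_of_mem hy, ← lintegral_indicator measurableSet_Ioo]
      congr with x
      simp [S, indicator_apply, hy.2]
    · rw [indicator_of_notMem hy]
      refine (lintegral_congr fun x ↦ indicator_of_notMem ?_ _).trans lintegral_zero
      exact fun hp ↦ hy ⟨hp.1.trans hp.2.1, hp.2.2⟩
  rw [← lintegral_indicator measurableSet_Ioo, ← lintegral_indicator measurableSet_Ioo]
  simp only [← hL, ← hR]
  exact lintegral_lintegral_swap (hF.indicator hS).aemeasurable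

lemma lintegral_Ioo_ofReal_eq_ofReal_intervalIntegral {x y : ℝ} {g : ℝ → ℝ} (hxy : x ≤ y)
    (hg : IntervalIntegrable g volume x y) (hg₀ : ∀ s ∈ Ioo x y, 0 ≤ g s) :
    ∫⁻ s in Ioo x y, ENNReal.ofReal (g s) = ENNReal.ofReal (∫ s in x..y, g s) := by
  rw [intervalIntegral.integral_of_le hxy, integral_Ioc_eq_integral_Ioo,
    ofReal_integral_eq_lintegral_ofReal (hg.1.mono_set Ioo_subset_Ioc_self)
      ((ae_restrict_iff' measurableSet_Ioo).2 (ae_of_all _ hg₀))]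

lemma lintegral_Ioo_rpow_sub {r x y b : ℝ} (hxy : x ≤ y) (hyb : y ≤ b)
    (hr : -1 < r ∨ r ≠ -1 ∧ y < b) :
    ∫⁻ s in Ioo x y, ENNReal.ofReal ((b - s) ^ r) =
      ENNReal.ofReal (((b - x) ^ (r + 1) - (b - y) ^ (r + 1)) / (r + 1)) := by
  have h0 : -1 < r ∨ r ≠ -1 ∧ (0 : ℝ) ∉ uIcc (b - y) (b - x) := by
    refine hr.imp_right fun h ↦ ⟨h.1, fun h0 ↦ ?_⟩
    rw [uIcc_of_le (by linarith)] at h0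
    linarith [h0.1]
  have hint : IntervalIntegrable (fun t : ℝ ↦ t ^ r) volume (b - y) (b - x) := by
    rcases h0 with h | h
    · exact intervalIntegral.intervalIntegrable_rpow' h
    · exact intervalIntegral.intervalIntegrable_rpow (Or.inr h.2)
  rw [lintegral_Ioo_ofReal_eq_ofReal_intervalIntegral hxy, intervalIntegral.integral_comp_sub_left
    (fun t ↦ t ^ r), integral_rpow h0]
  · simpa using (hint.comp_sub_left b).symm
  · exact fun s hs ↦ Real.rpow_nonneg (by linarith [hs.2]) r

lemma lintegral_Ioo_rpow_neg_half {x b : ℝ} (hxb : x ≤ b) :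
    ∫⁻ s in Ioo x b, ENNReal.ofReal ((b - s) ^ (-(1 / 2) : ℝ)) =
      2 * ENNReal.ofReal ((b - x) ^ (1 / 2 : ℝ)) := by
  rw [lintegral_Ioo_rpow_sub hxb le_rfl (Or.inl (by norm_num)), ← ENNReal.ofReal_ofNat 2,
    ← ENNReal.ofReal_mul zero_le_two, show (-(1 / 2) : ℝ) + 1 = 1 / 2 by norm_num, sub_self,
    Real.zero_rpow (by norm_num), sub_zero]
  ring_nf

lemma lintegral_Ioo_rpow_neg_three_halves_le {x y b : ℝ} (hxy : x ≤ y) (hyb : y < b) :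
    ∫⁻ s in Ioo x y, ENNReal.ofReal ((b - s) ^ (-(3 / 2) : ℝ)) ≤
      2 * ENNReal.ofReal ((b - y) ^ (-(1 / 2) : ℝ)) := by
  rw [lintegral_Ioo_rpow_sub hxy hyb.le (Or.inr ⟨by norm_num, hyb⟩), ← ENNReal.ofReal_ofNat 2,
    ← ENNReal.ofReal_mul zero_le_two, show (-(3 / 2) : ℝ) + 1 = -(1 / 2) by norm_num]
  refine ENNReal.ofReal_le_ofReal ?_
  linarith [Real.rpow_nonneg (by linarith : (0 : ℝ) ≤ b - x) (-(1 / 2))]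

lemma sq_lintegral_mul_le {α : Type*} [MeasurableSpace α] (μ : Measure α) {f g : α → ℝ≥0∞}
    (hf : AEMeasurable f μ) (hg : AEMeasurable g μ) :
    (∫⁻ a, f a * g a ∂μ) ^ 2 ≤ (∫⁻ a, f a ^ 2 ∂μ) * ∫⁻ a, g a ^ 2 ∂μ := by
  have h := ENNReal.lintegral_mul_le_Lp_mul_Lq μ Real.HolderConjugate.two_two hf hg
  simp only [Pi.mul_apply, ENNReal.rpow_two] at h
  calc (∫⁻ a, f a * g a ∂μ) ^ 2
      ≤ ((∫⁻ a, f a ^ 2 ∂μ) ^ (1 / 2 : ℝ) * (∫⁻ a, g a ^ 2 ∂μ) ^ (1 / 2 : ℝ)) ^ 2 := by gcongr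
    _ = (∫⁻ a, f a ^ 2 ∂μ) * ∫⁻ a, g a ^ 2 ∂μ := by
      rw [mul_pow, ← ENNReal.rpow_two, ← ENNReal.rpow_two, ← ENNReal.rpow_mul, ← ENNReal.rpow_mul]
      norm_num

lemma ofReal_rpow_sq {t : ℝ} (ht : 0 ≤ t) (r : ℝ) :
    ENNReal.ofReal (t ^ r) ^ 2 = ENNReal.ofReal (t ^ (2 * r)) := by
  rw [← ENNReal.ofReal_pow (Real.rpow_nonneg ht r), ← Real.rpow_natCast, ← Real.rpow_mul ht,
    mul_comm, Nat.cast_ofNat]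

lemma sq_lintegral_Ioo_le {φ : ℝ → ℝ≥0∞} (hφ : Measurable φ) {x b : ℝ} (hxb : x ≤ b) :
    (∫⁻ s in Ioo x b, φ s) ^ 2 ≤
      2 * ENNReal.ofReal ((b - x) ^ (1 / 2 : ℝ)) *
        ∫⁻ s in Ioo x b, φ s ^ 2 * ENNReal.ofReal ((b - s) ^ (1 / 2 : ℝ)) := by
  have hφ_eq : ∫⁻ s in Ioo x b, φ s = ∫⁻ s in Ioo x b,
      (φ s * ENNReal.ofReal ((b - s) ^ (1 / 4 : ℝ))) * ENNReal.ofReal ((b - s) ^ (-(1 / 4) : ℝ)) := by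
    refine setLIntegral_congr_fun measurableSet_Ioo fun s hs ↦ ?_
    have hbs : 0 < b - s := sub_pos.2 hs.2
    rw [mul_assoc, ← ENNReal.ofReal_mul (by positivity), ← Real.rpow_add hbs]
    norm_num
  rw [hφ_eq, mul_comm, ← lintegral_Ioo_rpow_neg_half hxb]
  refine (sq_lintegral_mul_le _ (by fun_prop) (by fun_prop)).trans_eq ?_
  congr 1 <;> refine setLIntegral_congr_fun measurableSet_Ioo fun s hs ↦ ?_ <;>
    norm_num [mul_pow, ofReal_rpow_sq (sub_pos.2 hs.2).le]

theorem hardy_inequality_Ioo (a b : ℝ) {φ : ℝ → ℝ≥0∞} (hφ : Measurable φ) :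
    ∫⁻ x in Ioo a b, (∫⁻ s in Ioo x b, φ s) ^ 2 / ENNReal.ofReal (b - x) ^ 2 ≤
      4 * ∫⁻ s in Ioo a b, φ s ^ 2 := by
  set ψ : ℝ → ℝ≥0∞ := fun s ↦ φ s ^ 2 * ENNReal.ofReal ((b - s) ^ (1 / 2 : ℝ))
  have hweight : ∀ x < b, ENNReal.ofReal ((b - x) ^ (1 / 2 : ℝ)) / ENNReal.ofReal (b - x) ^ 2 =
      ENNReal.ofReal ((b - x) ^ (-(3 / 2) : ℝ)) := by
    intro x hx
    have hbx : 0 < b - x := sub_pos.2 hx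
    rw [← ENNReal.ofReal_pow hbx.le, ← ENNReal.ofReal_div_of_pos (by positivity),
      ← Real.rpow_two, ← Real.rpow_sub hbx]
    norm_num
  calc ∫⁻ x in Ioo a b, (∫⁻ s in Ioo x b, φ s) ^ 2 / ENNReal.ofReal (b - x) ^ 2
      ≤ ∫⁻ x in Ioo a b, ∫⁻ s in Ioo x b, 2 * ENNReal.ofReal ((b - x) ^ (-(3 / 2) : ℝ)) * ψ s := by
        refine setLIntegral_mono' measurableSet_Ioo fun x hx ↦ ?_
        rw [lintegral_const_mul' _ _ (by finiteness), ← hweight x hx.2]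
        calc (∫⁻ s in Ioo x b, φ s) ^ 2 / ENNReal.ofReal (b - x) ^ 2
            ≤ 2 * ENNReal.ofReal ((b - x) ^ (1 / 2 : ℝ)) * (∫⁻ s in Ioo x b, ψ s) /
                ENNReal.ofReal (b - x) ^ 2 := by gcongr; exact sq_lintegral_Ioo_le hφ hx.2.le
          _ = _ := by simp only [div_eq_mul_inv]; ring
    _ = ∫⁻ s in Ioo a b, ∫⁻ x in Ioo a s, 2 * ENNReal.ofReal ((b - x) ^ (-(3 / 2) : ℝ)) * ψ s :=
        lintegral_Ioo_lintegral_Ioo_swap a b (by fun_prop)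
    _ ≤ ∫⁻ s in Ioo a b, 4 * φ s ^ 2 := by
        refine setLIntegral_mono' measurableSet_Ioo fun s hs ↦ ?_
        rw [lintegral_mul_const _ (by fun_prop), lintegral_const_mul' _ _ (by finiteness)]
        have hbs : 0 < b - s := sub_pos.2 hs.2
        have hcancel : ENNReal.ofReal ((b - s) ^ (-(1 / 2) : ℝ)) *
            ENNReal.ofReal ((b - s) ^ (1 / 2 : ℝ)) = 1 := by
          rw [← ENNReal.ofReal_mul (by positivity), ← Real.rpow_add hbs]
          norm_num
        calc (2 * ∫⁻ x in Ioo a s, ENNReal.ofReal ((b - x) ^ (-(3 / 2) : ℝ))) * ψ s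
            ≤ (2 * (2 * ENNReal.ofReal ((b - s) ^ (-(1 / 2) : ℝ)))) * ψ s := by
              gcongr; exact lintegral_Ioo_rpow_neg_three_halves_le hs.1.le hs.2
          _ = 4 * φ s ^ 2 := by
              rw [show (2 : ℝ≥0∞) * (2 * ENNReal.ofReal ((b - s) ^ (-(1 / 2) : ℝ))) * ψ s =
                4 * φ s ^ 2 * (ENNReal.ofReal ((b - s) ^ (-(1 / 2) : ℝ)) *
                  ENNReal.ofReal ((b - s) ^ (1 / 2 : ℝ))) by ring, hcancel, mul_one]
    _ = 4 * ∫⁻ s in Ioo a b, φ s ^ 2 := lintegral_const_mul' _ _ (by finiteness)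

lemma enorm_sub_le_lintegral_fderiv_apply_fst {E : Type*} [NormedAddCommGroup E]
    [NormedSpace ℝ E] {v : ℝ × ℝ → E} {U : Set (ℝ × ℝ)} (hU : IsOpen U) (hv : ContDiffOn ℝ 1 v U)
    {x y η : ℝ} (hxy : x ≤ y) (hseg : ∀ s ∈ Icc x y, (s, η) ∈ U) :
    ‖v (y, η) - v (x, η)‖ₑ ≤ ∫⁻ s in Ioo x y, ‖fderiv ℝ v (s, η) (1, 0)‖ₑ := by
  have hline : ContDiffOn ℝ 1 (fun s ↦ v (s, η)) (Icc x y) :=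
    hv.comp (by fun_prop : ContDiff ℝ 1 fun s : ℝ ↦ (s, η)).contDiffOn hseg
  refine (enorm_sub_le_lintegral_deriv_of_contDiffOn_Icc hline hxy).trans_eq ?_
  rw [← restrict_Ioo_eq_restrict_Icc]
  refine setLIntegral_congr_fun measurableSet_Ioo fun s hs ↦ ?_
  have hd : DifferentiableAt ℝ v (s, η) :=
    (hv.contDiffAt (hU.mem_nhds (hseg s (Ioo_subset_Icc_self hs)))).differentiableAt one_ne_zero
  exact congrArg (‖·‖ₑ)
    (hd.hasFDerivAt.comp_hasDerivAt s ((hasDerivAt_id s).prodMk (hasDerivAt_const s η))).deriv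

lemma duffy_increment_le {v : ℝ × ℝ → ℝ} (hv : ContDiffOn ℝ 1 v refTriangle) {ξ η : ℝ}
    (hp : (ξ, η) ∈ refTriangle) :
    ENNReal.ofReal (((ξ - 1) ^ 2 + η ^ 2)⁻¹ * (v (η * (1 - ξ) + ξ, η) - v (ξ, η)) ^ 2) ≤
      (∫⁻ s in Ioo ξ 1, ‖fderiv ℝ v (s, η) (1, 0)‖ₑ) ^ 2 / ENNReal.ofReal (1 - ξ) ^ 2 := by
  obtain ⟨hη, hηξ, hξ⟩ := hp
  have hξq : ξ ≤ η * (1 - ξ) + ξ := by nlinarith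
  have hq : η * (1 - ξ) + ξ < 1 := by nlinarith
  have hseg : ∀ s ∈ Icc ξ (η * (1 - ξ) + ξ), (s, η) ∈ refTriangle :=
    fun s hs ↦ ⟨hη, hηξ.trans_le hs.1, hs.2.trans_lt hq⟩
  have hweight : ((ξ - 1) ^ 2 + η ^ 2)⁻¹ ≤ ((1 - ξ) ^ 2)⁻¹ :=
    inv_anti₀ (by nlinarith) (by nlinarith)
  calc ENNReal.ofReal (((ξ - 1) ^ 2 + η ^ 2)⁻¹ * (v (η * (1 - ξ) + ξ, η) - v (ξ, η)) ^ 2)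
      ≤ ENNReal.ofReal ((v (η * (1 - ξ) + ξ, η) - v (ξ, η)) ^ 2 / (1 - ξ) ^ 2) := by
        rw [div_eq_inv_mul]; gcongr
    _ = ‖v (η * (1 - ξ) + ξ, η) - v (ξ, η)‖ₑ ^ 2 / ENNReal.ofReal (1 - ξ) ^ 2 := by
        rw [ENNReal.ofReal_div_of_pos (by nlinarith), ← sq_abs, ENNReal.ofReal_pow (abs_nonneg _),
          ENNReal.ofReal_pow (by linarith), Real.enorm_eq_ofReal_abs]
    _ ≤ (∫⁻ s in Ioo ξ 1, ‖fderiv ℝ v (s, η) (1, 0)‖ₑ) ^ 2 / ENNReal.ofReal (1 - ξ) ^ 2 := by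
        gcongr
        exact (enorm_sub_le_lintegral_fderiv_apply_fst isOpen_refTriangle hv hξq hseg).trans
          (lintegral_mono_set (Ioo_subset_Ioo_right hq.le))

/-- Near-identity of the Duffy transform at `V̂ = (1,0)` in a weighted sense (case θ = 1):
`∫_{T̂} d_V̂(ξ,η)⁻² (v(η(1-ξ)+ξ, η) - v(ξ,η))² dξ dη ≤ C ∫_{T̂} |∂₁v|²`. -/
theorem duffy_near_identity_weighted :
    ∃ C : ℝ, 0 < C ∧
      ∀ v : ℝ × ℝ → ℝ, ContDiffOn ℝ 1 v refTriangle →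
        (∫⁻ p in refTriangle,
            ENNReal.ofReal (((p.1 - 1) ^ 2 + p.2 ^ 2)⁻¹ *
              (v (p.2 * (1 - p.1) + p.1, p.2) - v p) ^ 2))
          ≤ ENNReal.ofReal C *
            ∫⁻ p in refTriangle,
              ENNReal.ofReal ((fderivWithin ℝ v refTriangle p (1, 0)) ^ 2) := by
  refine ⟨4, by norm_num, fun v hv ↦ ?_⟩
  set D : ℝ × ℝ → ℝ := fun p ↦ fderiv ℝ v p (1, 0)
  have hD : Measurable D := measurable_fderiv_apply_const ℝ v (1, 0)
  have hRHS : ∫⁻ p in refTriangle, ENNReal.ofReal ((fderivWithin ℝ v refTriangle p (1, 0)) ^ 2) =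
      ∫⁻ p in refTriangle, ‖D p‖ₑ ^ 2 :=
    setLIntegral_congr_fun isOpen_refTriangle.measurableSet fun p hp ↦ by
      rw [fderivWithin_of_isOpen isOpen_refTriangle hp, Real.enorm_eq_ofReal_abs,
        ← ENNReal.ofReal_pow (abs_nonneg _), sq_abs]
  calc _ ≤ ∫⁻ η in Ioo 0 1, ∫⁻ ξ in Ioo η 1, ENNReal.ofReal (((ξ - 1) ^ 2 + η ^ 2)⁻¹ *
          (v (η * (1 - ξ) + ξ, η) - v (ξ, η)) ^ 2) := setLIntegral_refTriangle_le _
    _ ≤ ∫⁻ η in Ioo 0 1, ∫⁻ ξ in Ioo η 1,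
          (∫⁻ s in Ioo ξ 1, ‖D (s, η)‖ₑ) ^ 2 / ENNReal.ofReal (1 - ξ) ^ 2 :=
        setLIntegral_mono' measurableSet_Ioo fun η hη ↦ setLIntegral_mono' measurableSet_Ioo
          fun ξ hξ ↦ duffy_increment_le hv ⟨hη.1, hξ.1, hξ.2⟩
    _ ≤ ∫⁻ η in Ioo 0 1, 4 * ∫⁻ ξ in Ioo η 1, ‖D (ξ, η)‖ₑ ^ 2 :=
        lintegral_mono fun η ↦ hardy_inequality_Ioo η 1 (by fun_prop)
    _ = ENNReal.ofReal 4 * ∫⁻ p in refTriangle, ‖D p‖ₑ ^ 2 := by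
        rw [lintegral_const_mul' _ _ (by finiteness), setLIntegral_refTriangle (by fun_prop)]
        norm_num
    _ = _ := by rw [hRHS]
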